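/- arXiv:2304.06361 — 3 statements merged into one kernel-verified Lean document; each statement's English description precedes it below -/
import Mathlib

section
/- Let A ⊆ (2^ω)^ω be a dense G_δ set. Then there exist nonempty perfect sets P_k ⊆ 2^ω (each homeomorphic to Cantor space) such that ∏_{k∈ω} P_k ⊆ A. -/
/-!
Write `A = ⋂ n, U n` with every `U n` dense and open. We build, stage by stage, binary trees
`T₀, T₁, …` of finite binary strings: at stage `n` each of `T₀, …, Tₙ` splits once more, and the
nodes of all trees are lengthened so that every choice of one current node in each of `T₀, …, Tₙ`
spans a basic open box inside `U n`. Only finitely many such choices exist and each box is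
determined by finitely many coordinates, so this is a finite sequence of extensions into a dense
open set. The set `P k` of branches of `T k` is the image of Cantor space under a continuous
injection, hence a perfect copy of it, and a point of `∏ P k` lies in one box of every stage,
hence in every `U n`.
-/

open Set Filter Topology PiNat

section Cylinders

variable {E : Type*} [TopologicalSpace E] [DiscreteTopology E]

lemma exists_cylinder_subset_of_mem_nhds {V : Set (ℕ → E)} {z : ℕ → E} (hV : V ∈ 𝓝 z) :
    ∃ M, cylinder z M ⊆ V := by
  obtain ⟨W, hWV, hWo, hzW⟩ := mem_nhds_iff.1 hV
  obtain ⟨_, ⟨y, M, rfl⟩, hzy, hyW⟩ :=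
    (isTopologicalBasis_cylinders fun _ => E).exists_subset_of_mem_open hzW hWo
  exact ⟨M, (mem_cylinder_iff_eq.1 hzy).symm ▸ hyW.trans hWV⟩

lemma exists_pi_cylinder_subset_of_mem_nhds {V : Set (ℕ → ℕ → E)} {z : ℕ → ℕ → E}
    (hV : V ∈ 𝓝 z) : ∃ M, {x | ∀ k < M, x k ∈ cylinder (z k) M} ⊆ V := by
  rw [nhds_pi, Filter.mem_pi'] at hV
  obtain ⟨I, t, ht, hIt⟩ := hV
  choose m hm using fun k => exists_cylinder_subset_of_mem_nhds (ht k)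
  refine ⟨I.sup fun k => max (m k) (k + 1), fun x hx => hIt fun k hk => hm k ?_⟩
  have hle := Finset.le_sup (f := fun k => max (m k) (k + 1)) hk
  exact cylinder_anti _ ((le_max_left _ _).trans hle)
    (hx k (Nat.lt_of_succ_le ((le_max_right _ _).trans hle)))

instance [Nontrivial E] : PerfectSpace (ℕ → E) := by
  refine ⟨preperfect_iff_nhds.2 fun x _ V hV => ?_⟩
  obtain ⟨M, hM⟩ := exists_cylinder_subset_of_mem_nhds hV
  obtain ⟨e, he⟩ := exists_ne (x M)
  refine ⟨Function.update x M e,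
    ⟨hM fun i hi => Function.update_of_ne hi.ne _ _, trivial⟩, fun h => he ?_⟩
  simpa using congrFun h M

end Cylinders

lemma preperfect_range_of_continuous_of_injective {α β : Type*} [TopologicalSpace α]
    [TopologicalSpace β] [PerfectSpace α] {f : α → β} (hf : Continuous f)
    (hinj : Function.Injective f) : Preperfect (range f) := by
  rw [preperfect_iff_nhds]
  rintro _ ⟨x, rfl⟩ V hV
  obtain ⟨y, hy, hyx⟩ :=
    preperfect_iff_nhds.1 PerfectSpace.univ_preperfect x trivial _ (hf.continuousAt hV)
  exact ⟨f y, ⟨hy.1, mem_range_self y⟩, hinj.ne hyx⟩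

lemma List.IsPrefix.getD_eq {α : Type*} {L L' : List α} (h : L <+: L') {i : ℕ}
    (hi : i < L.length) (d : α) : L'.getD i d = L.getD i d := by
  obtain ⟨r, rfl⟩ := h
  exact List.getD_append _ _ _ _ hi

def listCylinder (L : List Bool) : Set (ℕ → Bool) :=
  cylinder (fun i => L.getD i false) L.length

lemma mem_listCylinder {L : List Bool} {g : ℕ → Bool} :
    g ∈ listCylinder L ↔ ∀ i < L.length, g i = L.getD i false :=
  Iff.rfl

lemma isOpen_listCylinder (L : List Bool) : IsOpen (listCylinder L) :=
  isOpen_cylinder _ _ _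

lemma listCylinder_nil : listCylinder [] = univ := by
  simp [listCylinder, cylinder]

lemma listCylinder_anti {L L' : List Bool} (h : L <+: L') : listCylinder L' ⊆ listCylinder L :=
  fun _ hg i hi => (hg i (hi.trans_le h.length_le)).trans (h.getD_eq hi false)

lemma listCylinder_ofFn (z : ℕ → Bool) (M : ℕ) :
    listCylinder (List.ofFn fun i : Fin M => z i) = cylinder z M := by
  ext g
  simp only [mem_listCylinder, mem_cylinder_iff, List.length_ofFn]
  refine forall₂_congr fun i hi => ?_
  rw [List.getD_eq_getElem _ _ (by simpa using hi), List.getElem_ofFn]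

lemma prefix_ofFn_of_mem_listCylinder {L : List Bool} {g : ℕ → Bool} (hg : g ∈ listCylinder L)
    {n : ℕ} (hn : L.length ≤ n) : L <+: List.ofFn fun i : Fin n => g i := by
  refine List.prefix_iff_eq_take.2 (List.ext_getElem (by simpa using hn) fun i h₁ _ => ?_)
  rw [List.getElem_take, List.getElem_ofFn, hg i h₁]
  exact (List.getD_eq_getElem _ _ h₁).symm

def limitOfPrefixes (s : ℕ → List Bool) : ℕ → Bool := fun m => (s (m + 1)).getD m false

lemma limitOfPrefixes_mem_listCylinder {s : ℕ → List Bool}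
    (hs : ∀ n, ∃ c, s n ++ [c] <+: s (n + 1)) (n : ℕ) :
    limitOfPrefixes s ∈ listCylinder (s n) := by
  have hmono : ∀ {m n}, m ≤ n → s m <+: s n := by
    intro m n h
    induction n, h using Nat.le_induction with
    | base => exact List.prefix_rfl
    | succ n _ ih =>
      obtain ⟨c, hc⟩ := hs n
      exact ih.trans ((List.prefix_append _ _).trans hc)
  have hlen : ∀ n, n ≤ (s n).length := by
    intro n
    induction n with
    | zero => exact Nat.zero_le _
    | succ n ih =>
      obtain ⟨c, hc⟩ := hs n
      have := hc.length_le
      simp only [List.length_append, List.length_singleton] at this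
      omega
  intro i hi
  rcases le_total (i + 1) n with h | h
  · exact ((hmono h).getD_eq (hlen (i + 1)) false).symm
  · exact (hmono h).getD_eq hi false

section Boxes

def boxCylinder (N : ℕ → List Bool) : Set (ℕ → ℕ → Bool) :=
  univ.pi fun k => listCylinder (N k)

lemma boxCylinder_anti {N N' : ℕ → List Bool} (h : ∀ k, N k <+: N' k) :
    boxCylinder N' ⊆ boxCylinder N :=
  fun _ hx k _ => listCylinder_anti (h k) (hx k trivial)

lemma isOpen_boxCylinder {N : ℕ → List Bool} (hN : ∀ᶠ k in cofinite, N k = []) :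
    IsOpen (boxCylinder N) := by
  have : boxCylinder N = {k | N k ≠ []}.pi fun k => listCylinder (N k) := by
    ext x
    refine ⟨fun h k _ => h k trivial, fun h k _ => ?_⟩
    by_cases hk : N k = []
    · simp [hk, listCylinder_nil]
    · exact h k hk
  rw [this]
  exact isOpen_set_pi (eventually_cofinite.1 hN) fun k _ => isOpen_listCylinder _

variable {U : Set (ℕ → ℕ → Bool)}

lemma Dense.exists_extend_boxCylinder_subset (hd : Dense U) (hU : IsOpen U)
    {N : ℕ → List Bool} (hN : ∀ᶠ k in cofinite, N k = []) :
    ∃ N' : ℕ → List Bool,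
      (∀ k, N k <+: N' k) ∧ (∀ᶠ k in cofinite, N' k = []) ∧ boxCylinder N' ⊆ U := by
  obtain ⟨z, hzU, hzN⟩ := hd.exists_mem_open (isOpen_boxCylinder hN)
    ⟨fun k i => (N k).getD i false, fun k _ => self_mem_cylinder _ _⟩
  obtain ⟨M, hM⟩ := exists_pi_cylinder_subset_of_mem_nhds (hU.mem_nhds hzU)
  refine ⟨fun k => if k < M then List.ofFn (fun i : Fin (max M (N k).length) => z k i) else N k,
    fun k => ?_, ?_, fun x hx => hM fun k hk => ?_⟩
  · dsimp only
    split_ifs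
    · exact prefix_ofFn_of_mem_listCylinder (hzN k trivial) (le_max_right _ _)
    · exact List.prefix_rfl
  · filter_upwards [hN, (finite_Iio M).eventually_cofinite_notMem] with k hk hMk
    simp_all
  · have hxk := hx k trivial
    simp only [hk, if_true, listCylinder_ofFn] at hxk
    exact cylinder_anti _ (le_max_left _ _) hxk

lemma Dense.exists_extend_forall_boxCylinder_subset (hd : Dense U) (hU : IsOpen U)
    (l : List (ℕ → List Bool)) {A : ℕ → List Bool → List Bool}
    (hA : ∀ᶠ k in cofinite, ∀ t, A k t = []) :
    ∃ A' : ℕ → List Bool → List Bool, (∀ k t, A k t <+: A' k t) ∧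
      (∀ᶠ k in cofinite, ∀ t, A' k t = []) ∧
      ∀ τ ∈ l, boxCylinder (fun k => A' k (τ k)) ⊆ U := by
  classical
  induction l generalizing A with
  | nil => exact ⟨A, fun _ _ => List.prefix_rfl, hA, by simp⟩
  | cons τ l ih =>
    obtain ⟨N, hAN, hN, hNU⟩ :=
      hd.exists_extend_boxCylinder_subset hU (N := fun k => A k (τ k)) (hA.mono fun k hk => hk _)
    obtain ⟨A', hA₁A', hA', hA'U⟩ := ih (A := fun k t => if t = τ k then N k else A k t) (by
      filter_upwards [hA, hN] with k hk hNk t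
      split_ifs <;> simp [hk, hNk])
    refine ⟨A', fun k t => List.IsPrefix.trans ?_ (hA₁A' k t), hA', ?_⟩
    · split_ifs with h
      · exact h ▸ hAN k
      · exact List.prefix_rfl
    · rintro σ (_ | ⟨_, hσ⟩)
      · exact (boxCylinder_anti fun k => by simpa using hA₁A' k (τ k)).trans hNU
      · exact hA'U σ hσ

/-- The labels, read off `u`, of one node of each tree `k ≤ n` after stage `n`; tree `k` has
split `n + 1 - k` times by then. -/
def levelNodes (n : ℕ) (u : Fin (n + 1) → Fin (n + 1) → Bool) (k : ℕ) : List Bool :=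
  if h : k ≤ n then List.ofFn fun i : Fin (n + 1 - k) => u ⟨k, by omega⟩ ⟨i, by omega⟩ else []

lemma Dense.exists_split_boxCylinder_levelNodes_subset (hd : Dense U) (hU : IsOpen U) (n : ℕ)
    {A : ℕ → List Bool → List Bool}
    (hA : ∀ᶠ k in cofinite, ∀ t, A k t = []) :
    ∃ A' : ℕ → List Bool → List Bool, (∀ᶠ k in cofinite, ∀ t, A' k t = []) ∧
      (∀ k t c, k ≤ n → A k t ++ [c] <+: A' k (t ++ [c])) ∧
      (∀ k t, n < k → A k [] <+: A' k t) ∧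
      ∀ u, boxCylinder (fun k => A' k (levelNodes n u k)) ⊆ U := by
  -- each tree `k ≤ n` splits: the node `t ++ [c]` starts out as `A k t ++ [c]`
  let A₀ : ℕ → List Bool → List Bool := fun k t =>
    if k ≤ n then A k t.dropLast ++ [t.getLastD false] else A k []
  have hA₀ : ∀ᶠ k in cofinite, ∀ t, A₀ k t = [] := by
    filter_upwards [hA, (finite_Iic n).eventually_cofinite_notMem] with k hk hnk t
    simp_all [A₀]
  obtain ⟨A', hA₀A', hA', hA'U⟩ :=
    hd.exists_extend_forall_boxCylinder_subset hU (Finset.univ.toList.map (levelNodes n)) hA₀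
  refine ⟨A', hA', fun k t c hk => ?_, fun k t hk => ?_,
    fun u => hA'U _ (List.mem_map_of_mem (Finset.mem_toList.2 (Finset.mem_univ u)))⟩
  · simpa [A₀, hk] using hA₀A' k (t ++ [c])
  · simpa [A₀, Nat.not_le.2 hk] using hA₀A' k t

end Boxes

/-- `node n k t` is the node labelled `t` of the `k`-th tree after stage `n`. Tree `k` keeps a
single node (its stem, label `[]`) until stage `k` and splits once at every later stage. -/
structure TreeSystem where
  node : ℕ → ℕ → List Bool → List Bool
  split : ∀ n k t c, k ≤ n → node n k t ++ [c] <+: node (n + 1) k (t ++ [c])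
  stem : ∀ n k t, n < k → node n k [] <+: node (n + 1) k t

lemma exists_treeSystem_boxCylinder_subset (U : ℕ → Set (ℕ → ℕ → Bool))
    (hU : ∀ n, IsOpen (U n)) (hd : ∀ n, Dense (U n)) :
    ∃ S : TreeSystem, ∀ n u, boxCylinder (fun k => S.node (n + 1) k (levelNodes n u k)) ⊆ U n := by
  let State := {A : ℕ → List Bool → List Bool // ∀ᶠ k in cofinite, ∀ t, A k t = []}
  have step : ∀ n (A : State), ∃ A' : State,
      (∀ k t c, k ≤ n → A.1 k t ++ [c] <+: A'.1 k (t ++ [c])) ∧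
      (∀ k t, n < k → A.1 k [] <+: A'.1 k t) ∧
      ∀ u, boxCylinder (fun k => A'.1 k (levelNodes n u k)) ⊆ U n := fun n A =>
    let ⟨A', hA', h⟩ := (hd n).exists_split_boxCylinder_levelNodes_subset (hU n) n A.2
    ⟨⟨A', hA'⟩, h⟩
  choose next hsplit hstem hsub using step
  let seq : ℕ → State := fun n => Nat.rec ⟨fun _ _ => [], by simp⟩ next n
  exact ⟨⟨fun n => (seq n).1, fun n => hsplit n (seq n), fun n => hstem n (seq n)⟩,
    fun n => hsub n (seq n)⟩

namespace TreeSystem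

variable (S : TreeSystem)

def nodeAlong (k : ℕ) (x : ℕ → Bool) (n : ℕ) : List Bool :=
  S.node (k + n) k (List.ofFn fun i : Fin n => x i)

lemma nodeAlong_zero (k : ℕ) (x : ℕ → Bool) : S.nodeAlong k x 0 = S.node k k [] := by
  simp [nodeAlong]

lemma nodeAlong_succ (k : ℕ) (x : ℕ → Bool) (n : ℕ) :
    S.nodeAlong k x n ++ [x n] <+: S.nodeAlong k x (n + 1) := by
  have hsnoc :
      (List.ofFn fun i : Fin (n + 1) => x i) = (List.ofFn fun i : Fin n => x i) ++ [x n] := by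
    rw [List.ofFn_succ', List.concat_eq_append]
    rfl
  rw [nodeAlong, nodeAlong, hsnoc]
  exact S.split (k + n) k _ (x n) (Nat.le_add_right k n)

lemma nodeAlong_congr (k : ℕ) {x y : ℕ → Bool} {n : ℕ} (h : ∀ i < n, x i = y i) :
    S.nodeAlong k x n = S.nodeAlong k y n := by
  simp only [nodeAlong]
  congr 2
  funext i
  exact h i i.2

lemma node_nil_prefix {m n k : ℕ} (hmn : m ≤ n) (hnk : n ≤ k) :
    S.node m k [] <+: S.node n k [] := by
  induction n, hmn using Nat.le_induction with
  | base => exact List.prefix_rfl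
  | succ n _ ih => exact (ih (by omega)).trans (S.stem n k [] (by omega))

def branch (k : ℕ) (x : ℕ → Bool) : ℕ → Bool :=
  limitOfPrefixes (S.nodeAlong k x)

lemma branch_mem_listCylinder (k : ℕ) (x : ℕ → Bool) (n : ℕ) :
    S.branch k x ∈ listCylinder (S.nodeAlong k x n) :=
  limitOfPrefixes_mem_listCylinder (fun n => ⟨x n, S.nodeAlong_succ k x n⟩) n

lemma branch_apply_length (k : ℕ) (x : ℕ → Bool) (n : ℕ) :
    S.branch k x (S.nodeAlong k x n).length = x n := by
  have h := listCylinder_anti (S.nodeAlong_succ k x n) (S.branch_mem_listCylinder k x (n + 1))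
  simpa using h (S.nodeAlong k x n).length (by simp)

lemma branch_injective (k : ℕ) : Function.Injective (S.branch k) := by
  intro x y hxy
  have hagree : ∀ n, ∀ i < n, x i = y i := by
    intro n
    induction n with
    | zero => simp
    | succ n ih =>
      intro i hi
      rcases Nat.lt_succ_iff_lt_or_eq.1 hi with hi | rfl
      · exact ih i hi
      · rw [← S.branch_apply_length k x, ← S.branch_apply_length k y, ← S.nodeAlong_congr k ih,
          hxy]
  exact funext fun i => hagree (i + 1) i (Nat.lt_succ_self i)

lemma continuous_branch (k : ℕ) : Continuous (S.branch k) := by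
  refine continuous_pi fun m => ?_
  have : (fun x => S.branch k x m) =
      (fun v : Fin (m + 1) → Bool => (S.node (k + (m + 1)) k (List.ofFn v)).getD m false) ∘
        fun x i => x i := rfl
  rw [this]
  exact continuous_of_discreteTopology.comp (continuous_pi fun i => continuous_apply _)

lemma branch_mem_boxCylinder (n : ℕ) (xs : ℕ → ℕ → Bool) :
    (fun k => S.branch k (xs k)) ∈
      boxCylinder (fun k => S.node (n + 1) k (levelNodes n (fun k i => xs k i) k)) := by
  intro k _
  show S.branch k (xs k) ∈ listCylinder (S.node (n + 1) k (levelNodes n (fun k i => xs k i) k))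
  by_cases hk : k ≤ n
  · have : S.node (n + 1) k (levelNodes n (fun k i => xs k i) k) =
        S.nodeAlong k (xs k) (n + 1 - k) := by
      simp only [levelNodes, dif_pos hk, nodeAlong, Nat.add_sub_cancel' (by omega : k ≤ n + 1)]
    rw [this]
    exact S.branch_mem_listCylinder k (xs k) _
  · simp only [levelNodes, dif_neg hk]
    refine listCylinder_anti (S.node_nil_prefix (by omega) le_rfl) ?_
    rw [← S.nodeAlong_zero k (xs k)]
    exact S.branch_mem_listCylinder k (xs k) 0

end TreeSystem

theorem stmt11 (A : Set (ℕ → (ℕ → Bool))) (hdense : Dense A) (hGδ : IsGδ A) :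
    ∃ P : ℕ → Set (ℕ → Bool),
      (∀ k, (P k).Nonempty ∧ Perfect (P k) ∧ Nonempty (P k ≃ₜ (ℕ → Bool))) ∧
      Set.pi Set.univ P ⊆ A := by
  obtain ⟨U, hUo, rfl⟩ := hGδ.eq_iInter_nat
  obtain ⟨S, hS⟩ :=
    exists_treeSystem_boxCylinder_subset U hUo fun n => hdense.mono (iInter_subset U n)
  refine ⟨fun k => range (S.branch k), fun k => ?_, fun y hy => ?_⟩
  · have hemb := (S.continuous_branch k).isClosedEmbedding (S.branch_injective k)
    exact ⟨range_nonempty _,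
      ⟨hemb.isClosed_range,
        preperfect_range_of_continuous_of_injective (S.continuous_branch k) (S.branch_injective k)⟩,
      ⟨hemb.toIsEmbedding.toHomeomorph.symm⟩⟩
  · choose xs hxs using fun k => hy k (mem_univ k)
    obtain rfl : (fun k => S.branch k (xs k)) = y := funext hxs
    exact mem_iInter.2 fun n => hS n _ (S.branch_mem_boxCylinder n xs)
end

section
/- Let f : X → Y be a Baire function where X is a completely metrizable space and Y is a separable metrizable space. Then there exists a meager set m ⊆ X such that the restriction of f to X \ m is continuous. -/
/-- a set has the Baire property if it is an open set modulo a meager set -/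
def HasBaireProperty {X : Type*} [TopologicalSpace X] (S : Set X) : Prop :=
  ∃ U m : Set X, IsOpen U ∧ IsMeagre m ∧ S = symmDiff U m

theorem stmt14 {X Y : Type*} [MetricSpace X] [CompleteSpace X]
    [MetricSpace Y] [TopologicalSpace.SeparableSpace Y]
    (f : X → Y) (hf : ∀ U : Set Y, IsOpen U → HasBaireProperty (f ⁻¹' U)) :
    ∃ m : Set X, IsMeagre m ∧ Continuous (mᶜ.restrict f) := by
  haveI := UniformSpace.secondCountable_of_separable Y
  obtain ⟨b, hbc, -, hb⟩ := TopologicalSpace.exists_countable_basis Y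
  have := hbc.to_subtype
  choose U m hU hm hsym using fun s : b => hf s (hb.isOpen s.2)
  refine ⟨⋃ s : b, m s, ?_, ?_⟩
  · rw [IsMeagre, Set.compl_iUnion]
    exact countable_iInter_mem.2 fun s => hm s
  · rw [hb.continuous_iff]
    intro s hs
    have hkey : (⋃ t : b, m t)ᶜ.restrict f ⁻¹' s = Subtype.val ⁻¹' (U ⟨s, hs⟩) := by
      ext x
      have hx : x.1 ∉ m ⟨s, hs⟩ := fun h => x.2 (Set.mem_iUnion.2 ⟨⟨s, hs⟩, h⟩)
      simp only [Set.restrict, Set.mem_preimage]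
      constructor
      · intro h
        have hmem : x.1 ∈ symmDiff (U ⟨s, hs⟩) (m ⟨s, hs⟩) := (hsym ⟨s, hs⟩) ▸ h
        rcases Set.mem_symmDiff.1 hmem with ⟨h1, _⟩ | ⟨h1, _⟩
        · exact h1
        · exact absurd h1 hx
      · intro h
        have hmem : x.1 ∈ f ⁻¹' (s : Set Y) :=
          (hsym ⟨s, hs⟩).symm ▸ Set.mem_symmDiff.2 (Or.inl ⟨h, hx⟩)
        exact hmem
    rw [hkey]
    exact (hU ⟨s, hs⟩).preimage continuous_subtype_val
end

section
/- Let P ⊆ [0,1] be a nonempty compact set with no isolated points which is totally disconnected. Then P is homeomorphic to Cantor space 2^ω. -/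
/-!
Cut a nonempty compact perfect totally disconnected set of reals at a point outside it lying in the
middle third of its convex hull. Both pieces are again nonempty, compact, perfect and totally
disconnected, and each has at most `2/3` of the original diameter. Iterating gives a binary scheme of
relatively clopen pieces whose diameters vanish along every branch; the induced map
`(ℕ → Bool) → P` is then a continuous bijection from a compact space, hence a homeomorphism.
-/

open Set Metric Filter Topology PiNat

namespace CantorScheme

variable {β α : Type*}

theorem exists_forall_mem_res {A : List β → Set α} (hcover : ∀ l, A l ⊆ ⋃ b, A (b :: l))
    {p : α} (hp : p ∈ A []) : ∃ x : ℕ → β, ∀ n, p ∈ A (res x n) := by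
  have hstep : ∀ l, p ∈ A l → ∃ b, p ∈ A (b :: l) := fun l hl => mem_iUnion.1 (hcover l hl)
  obtain ⟨b₀, -⟩ := hstep [] hp
  have : Nonempty β := ⟨b₀⟩
  choose! next hnext using hstep
  let L : ℕ → List β := fun n => Nat.rec [] (fun _ l => next l :: l) n
  have hL : ∀ n, res (fun k => next (L k)) n = L n ∧ p ∈ A (L n) := by
    intro n
    induction n with
    | zero => exact ⟨rfl, hp⟩
    | succ n ih => exact ⟨by rw [res_succ, ih.1], hnext _ ih.2⟩
  exact ⟨fun k => next (L k), fun n => (hL n).1 ▸ (hL n).2⟩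

theorem nonempty_homeomorph_of_partition [Finite β] [TopologicalSpace β] [DiscreteTopology β]
    [MetricSpace α] [CompleteSpace α] {A : List β → Set α} (hclosed : ∀ l, IsClosed (A l))
    (hne : ∀ l, (A l).Nonempty) (hpart : ∀ l, ⋃ b, A (b :: l) = A l)
    (hdisj : CantorScheme.Disjoint A) (hdiam : VanishingDiam A) :
    Nonempty ((ℕ → β) ≃ₜ A []) := by
  have hanti : CantorScheme.Antitone A := fun l b => (subset_iUnion _ b).trans (hpart l).subset
  have hdom : (inducedMap A).1 = univ :=
    (hanti.closureAntitone hclosed).map_of_vanishingDiam hdiam hne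
  let f : (ℕ → β) → A [] := fun x =>
    ⟨(inducedMap A).2 ⟨x, hdom ▸ mem_univ x⟩, map_mem ⟨x, hdom ▸ mem_univ x⟩ 0⟩
  have hcont : Continuous f :=
    (hdiam.map_continuous.comp (continuous_id.subtype_mk _)).subtype_mk _
  have hinj : Function.Injective f := fun x y hxy =>
    congrArg Subtype.val <|
      hdisj.map_injective (a₁ := ⟨x, _⟩) (a₂ := ⟨y, _⟩) (congrArg Subtype.val hxy)
  have hsurj : Function.Surjective f := by
    rintro ⟨p, hp⟩
    obtain ⟨x, hx⟩ := exists_forall_mem_res (fun l => (hpart l).superset) hp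
    refine ⟨x, Subtype.ext (eq_of_forall_dist_le fun ε hε => ?_)⟩
    obtain ⟨n, hn⟩ := hdiam.dist_lt ε hε x
    exact (hn _ (map_mem _ n) p (hx n)).le
  exact ⟨(hcont.homeoOfEquivCompactToT2 (f := Equiv.ofBijective f ⟨hinj, hsurj⟩))⟩

end CantorScheme

section Order

variable {α : Type*}

theorem exists_mem_Ioo_notMem_of_isTotallyDisconnected [ConditionallyCompleteLinearOrder α]
    [TopologicalSpace α] [OrderTopology α] [DenselyOrdered α] {C : Set α}
    (hC : IsTotallyDisconnected C) {u v : α} (huv : u < v) : ∃ c ∈ Ioo u v, c ∉ C := by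
  by_contra! h
  obtain ⟨x, hux, hxv⟩ := exists_between huv
  obtain ⟨y, hxy, hyv⟩ := exists_between hxv
  exact hxy.ne (hC (Ioo u v) h isPreconnected_Ioo ⟨hux, hxv⟩ ⟨hux.trans hxy, hyv⟩)

variable [LinearOrder α] {C : Set α} {c : α}

theorem inter_Iio_eq_inter_Iic (hc : c ∉ C) : C ∩ Iio c = C ∩ Iic c :=
  ext fun x => and_congr_right fun hx => show x < c ↔ x ≤ c from
    lt_iff_le_and_ne.trans (and_iff_left (ne_of_mem_of_not_mem hx hc))

theorem inter_Ioi_eq_inter_Ici (hc : c ∉ C) : C ∩ Ioi c = C ∩ Ici c :=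
  ext fun x => and_congr_right fun hx => show c < x ↔ c ≤ x from
    lt_iff_le_and_ne.trans (and_iff_left (ne_of_mem_of_not_mem hx hc).symm)

end Order

structure CantorLike (C : Set ℝ) : Prop where
  nonempty : C.Nonempty
  isCompact : IsCompact C
  preperfect : Preperfect C
  isTotallyDisconnected : IsTotallyDisconnected C

noncomputable def cutPoint (C : Set ℝ) : ℝ :=
  Classical.epsilon fun c =>
    c ∈ Ioo ((2 * sInf C + sSup C) / 3) ((sInf C + 2 * sSup C) / 3) ∧ c ∉ C

noncomputable def cutHalf (C : Set ℝ) : Bool → Set ℝ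
  | false => C ∩ Iio (cutPoint C)
  | true => C ∩ Ioi (cutPoint C)

noncomputable def halvingScheme (P : Set ℝ) : List Bool → Set ℝ
  | [] => P
  | b :: l => cutHalf (halvingScheme P l) b

theorem cutHalf_subset (C : Set ℝ) (b : Bool) : cutHalf C b ⊆ C := by
  cases b <;> exact inter_subset_left

theorem disjoint_cutHalf (C : Set ℝ) : Disjoint (cutHalf C false) (cutHalf C true) :=
  disjoint_left.2 fun _ hx hx' => (mem_Iio.1 hx.2).trans (mem_Ioi.1 hx'.2) |>.false

theorem disjoint_halvingScheme (P : Set ℝ) : CantorScheme.Disjoint (halvingScheme P) := by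
  rintro l (_ | _) (_ | _) hne
  · exact absurd rfl hne
  · exact disjoint_cutHalf _
  · exact (disjoint_cutHalf _).symm
  · exact absurd rfl hne

namespace CantorLike

section

variable {C : Set ℝ} (hC : CantorLike C)
include hC

theorem sInf_mem : sInf C ∈ C := hC.isCompact.sInf_mem hC.nonempty

theorem sSup_mem : sSup C ∈ C := hC.isCompact.sSup_mem hC.nonempty

theorem mem_Icc {x : ℝ} (hx : x ∈ C) : x ∈ Icc (sInf C) (sSup C) :=
  ⟨csInf_le hC.isCompact.bddBelow hx, le_csSup hC.isCompact.bddAbove hx⟩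

theorem sInf_lt_sSup : sInf C < sSup C := by
  obtain ⟨y, hyC, hy⟩ := (accPt_iff_nhds.1 (hC.preperfect _ hC.sInf_mem)) univ univ_mem
  exact (lt_of_le_of_ne (hC.mem_Icc hyC.2).1 (Ne.symm hy)).trans_le (hC.mem_Icc hyC.2).2

theorem cutPoint_spec :
    cutPoint C ∈ Ioo ((2 * sInf C + sSup C) / 3) ((sInf C + 2 * sSup C) / 3) ∧ cutPoint C ∉ C :=
  Classical.epsilon_spec <| exists_mem_Ioo_notMem_of_isTotallyDisconnected
    hC.isTotallyDisconnected (by linarith [hC.sInf_lt_sSup])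

theorem iUnion_cutHalf : ⋃ b, cutHalf C b = C := by
  refine (iUnion_subset (cutHalf_subset C)).antisymm fun x hx => mem_iUnion.2 ?_
  rcases lt_or_gt_of_ne (ne_of_mem_of_not_mem hx hC.cutPoint_spec.2) with h | h
  · exact ⟨false, hx, h⟩
  · exact ⟨true, hx, h⟩

theorem cutHalf (b : Bool) : CantorLike (cutHalf C b) := by
  obtain ⟨⟨hlo, hhi⟩, hcut⟩ := hC.cutPoint_spec
  have hab := hC.sInf_lt_sSup
  refine ⟨?_, ?_, ?_, fun t ht => hC.isTotallyDisconnected t (ht.trans (cutHalf_subset C b))⟩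
  · cases b
    · exact ⟨sInf C, hC.sInf_mem, show sInf C < cutPoint C by linarith⟩
    · exact ⟨sSup C, hC.sSup_mem, show cutPoint C < sSup C by linarith⟩
  · cases b
    · rw [_root_.cutHalf, inter_Iio_eq_inter_Iic hcut]
      exact hC.isCompact.inter_right isClosed_Iic
    · rw [_root_.cutHalf, inter_Ioi_eq_inter_Ici hcut]
      exact hC.isCompact.inter_right isClosed_Ici
  · cases b <;> rw [_root_.cutHalf, inter_comm]
    · exact hC.preperfect.open_inter isOpen_Iio
    · exact hC.preperfect.open_inter isOpen_Ioi

theorem diam_cutHalf_le (b : Bool) : diam (_root_.cutHalf C b) ≤ 2 / 3 * diam C := by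
  obtain ⟨⟨hlo, hhi⟩, -⟩ := hC.cutPoint_spec
  rw [Real.diam_eq hC.isCompact.isBounded]
  cases b
  · calc diam (_root_.cutHalf C false) ≤ diam (Icc (sInf C) (cutPoint C)) :=
          diam_mono (fun x hx => ⟨(hC.mem_Icc hx.1).1, le_of_lt hx.2⟩) (isBounded_Icc _ _)
      _ = cutPoint C - sInf C := Real.diam_Icc (by linarith [hC.sInf_lt_sSup])
      _ ≤ 2 / 3 * (sSup C - sInf C) := by linarith
  · calc diam (_root_.cutHalf C true) ≤ diam (Icc (cutPoint C) (sSup C)) :=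
          diam_mono (fun x hx => ⟨le_of_lt hx.2, (hC.mem_Icc hx.1).2⟩) (isBounded_Icc _ _)
      _ = sSup C - cutPoint C := Real.diam_Icc (by linarith [hC.sInf_lt_sSup])
      _ ≤ 2 / 3 * (sSup C - sInf C) := by linarith

end

section

variable {P : Set ℝ} (hP : CantorLike P)
include hP

theorem halvingScheme (l : List Bool) : CantorLike (halvingScheme P l) := by
  induction l with
  | nil => exact hP
  | cons b l ih => exact ih.cutHalf b

theorem diam_halvingScheme_le (l : List Bool) :
    diam (_root_.halvingScheme P l) ≤ (2 / 3) ^ l.length * diam P := by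
  induction l with
  | nil => simp [_root_.halvingScheme]
  | cons b l ih =>
    calc diam (_root_.halvingScheme P (b :: l))
        ≤ 2 / 3 * diam (_root_.halvingScheme P l) := (hP.halvingScheme l).diam_cutHalf_le b
      _ ≤ 2 / 3 * ((2 / 3) ^ l.length * diam P) := by gcongr
      _ = (2 / 3) ^ (b :: l).length * diam P := by rw [List.length_cons, pow_succ]; ring

theorem vanishingDiam_halvingScheme : CantorScheme.VanishingDiam (_root_.halvingScheme P) := by
  intro x
  have hlim : Tendsto (fun n : ℕ => ENNReal.ofReal ((2 / 3) ^ n * diam P)) atTop (𝓝 0) := by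
    simpa using ENNReal.tendsto_ofReal
      ((tendsto_pow_atTop_nhds_zero_of_lt_one (by norm_num) (by norm_num)).mul_const (diam P))
  refine tendsto_of_tendsto_of_tendsto_of_le_of_le tendsto_const_nhds hlim (fun _ => zero_le)
    fun n => ?_
  rw [← ENNReal.ofReal_toReal (hP.halvingScheme _).isCompact.isBounded.ediam_ne_top]
  exact ENNReal.ofReal_le_ofReal ((hP.diam_halvingScheme_le _).trans_eq (by rw [res_length]))

end

end CantorLike

theorem stmt17_general (P : Set ℝ) (hne : P.Nonempty)
    (hcomp : IsCompact P) (hperf : Preperfect P)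
    (htd : IsTotallyDisconnected P) :
    Nonempty (P ≃ₜ (ℕ → Bool)) := by
  have hP : CantorLike P := ⟨hne, hcomp, hperf, htd⟩
  obtain ⟨e⟩ := CantorScheme.nonempty_homeomorph_of_partition
    (fun l => (hP.halvingScheme l).isCompact.isClosed) (fun l => (hP.halvingScheme l).nonempty)
    (fun l => (hP.halvingScheme l).iUnion_cutHalf) (disjoint_halvingScheme P)
    hP.vanishingDiam_halvingScheme
  exact ⟨e.symm⟩

theorem stmt17 (P : Set ℝ) (hsub : P ⊆ Set.Icc 0 1) (hne : P.Nonempty)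
    (hcomp : IsCompact P) (hperf : Preperfect P)
    (htd : IsTotallyDisconnected P) :
    Nonempty (P ≃ₜ (ℕ → Bool)) :=
  stmt17_general P hne hcomp hperf htd
end
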